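/- arXiv:2411.18517 — 2 statements merged into one kernel-verified Lean document; each statement's English description precedes it below -/
import Mathlib

section
/- The 2n(2n−1)/2 matrices {γ_aγ_b : 1 ≤ a < b ≤ 2n} are linearly independent over ℂ, their complex span is a Lie subalgebra of the 2^n×2^n complex matrices under the commutator bracket, and the linear map determined by γ_aγ_b ↦ 2(E_{ab} − E_{ba}) (where E_{ab} is the 2n×2n matrix unit) is a Lie algebra isomorphism from this span onto the Lie algebra of antisymmetric complex 2n×2n matrices equipped with the commutator bracket. -/
open scoped Matrix ComplexOrder

namespace DG

noncomputable section

/-- 2×2 Pauli matrices -/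
def PX : Matrix (Fin 2) (Fin 2) ℂ := !![0, 1; 1, 0]
def PY : Matrix (Fin 2) (Fin 2) ℂ := !![0, -Complex.I; Complex.I, 0]
def PZ : Matrix (Fin 2) (Fin 2) ℂ := !![1, 0; 0, -1]

/-- Kronecker (tensor) product of `n` 2×2 matrices, as a matrix indexed by `Fin n → Fin 2`. -/
def tensor {n : ℕ} (f : Fin n → Matrix (Fin 2) (Fin 2) ℂ) :
    Matrix (Fin n → Fin 2) (Fin n → Fin 2) ℂ :=
  Matrix.of fun x y => ∏ i, f i (x i) (y i)

/-- Majorana operators on `n` qubits via Jordan–Wigner (0-based indexing: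
`γ (2j) = Z^{⊗j} ⊗ X ⊗ I`, `γ (2j+1) = Z^{⊗j} ⊗ Y ⊗ I`). -/
def γ (n : ℕ) (j : Fin (2 * n)) : Matrix (Fin n → Fin 2) (Fin n → Fin 2) ℂ :=
  tensor fun i =>
    if i.val < j.val / 2 then PZ
    else if i.val = j.val / 2 then (if j.val % 2 = 0 then PX else PY)
    else 1

/-- Ordered (increasing) product `γ_J` over a finite index set `J`. -/
def γProd (n : ℕ) (J : Finset (Fin (2 * n))) :
    Matrix (Fin n → Fin 2) (Fin n → Fin 2) ℂ :=
  ((J.sort (· ≤ ·)).map (γ n)).prod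

/-- Moments `A_J = Tr(γ_J† A)`. -/
def moment (n : ℕ) (A : Matrix (Fin n → Fin 2) (Fin n → Fin 2) ℂ)
    (J : Finset (Fin (2 * n))) : ℂ :=
  Matrix.trace ((γProd n J)ᴴ * A)

/-- The Grassmann algebra on `2n` anticommuting generators. -/
abbrev Grass (n : ℕ) := ExteriorAlgebra ℂ (Fin (2 * n) → ℂ)

/-- Grassmann generators. -/
def η (n : ℕ) (j : Fin (2 * n)) : Grass n :=
  ExteriorAlgebra.ι ℂ (Pi.single j 1)

/-- Ordered product `η_J`. -/
def ηProd (n : ℕ) (J : Finset (Fin (2 * n))) : Grass n :=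
  ((J.sort (· ≤ ·)).map (η n)).prod

/-- Fourier (Grassmann) transform `Ξ_A = Σ_J A_J η_J`. -/
def Xi (n : ℕ) (A : Matrix (Fin n → Fin 2) (Fin n → Fin 2) ℂ) : Grass n :=
  ∑ J : Finset (Fin (2 * n)), moment n A J • ηProd n J

/-- Exponential in the Grassmann algebra as a finite power series. -/
def gExp (n : ℕ) (x : Grass n) : Grass n :=
  ∑ k ∈ Finset.range (2 * n + 1), ((k.factorial : ℂ))⁻¹ • x ^ k

/-- The Gaussian exponent `(i/2) Σ M_{jk} η_j η_k + Σ d_j η_j`. -/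
def gaussArg (n : ℕ) (M : Matrix (Fin (2 * n)) (Fin (2 * n)) ℝ) (d : Fin (2 * n) → ℝ) :
    Grass n :=
  (Complex.I / 2) • ∑ j, ∑ k, (M j k : ℂ) • (η n j * η n k) + ∑ j, (d j : ℂ) • η n j

/-- `ρ` is a displaced Gaussian state (Fourier characterization). -/
def IsDisplacedGaussian (n : ℕ) (ρ : Matrix (Fin n → Fin 2) (Fin n → Fin 2) ℂ) : Prop :=
  ∃ (M : Matrix (Fin (2 * n)) (Fin (2 * n)) ℝ) (d : Fin (2 * n) → ℝ),
    Mᵀ = -M ∧ Xi n ρ = gExp n (gaussArg n M d)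

/-- `ρ` is an even Gaussian state (Fourier characterization with zero mean). -/
def IsEvenGaussian (n : ℕ) (ρ : Matrix (Fin n → Fin 2) (Fin n → Fin 2) ℂ) : Prop :=
  ∃ (M : Matrix (Fin (2 * n)) (Fin (2 * n)) ℝ),
    Mᵀ = -M ∧ Xi n ρ = gExp n (gaussArg n M 0)

/-- Mean vector `μ(ρ)_j = Tr(γ_j ρ)`. -/
def meanVec (n : ℕ) (ρ : Matrix (Fin n → Fin 2) (Fin n → Fin 2) ℂ) (j : Fin (2 * n)) : ℂ :=
  Matrix.trace (γ n j * ρ)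

/-- Antisymmetric covariance matrix: `Σ(ρ)_{jk} = Tr((γ_jγ_k)† ρ)` for `j < k`. -/
def covMat (n : ℕ) (ρ : Matrix (Fin n → Fin 2) (Fin n → Fin 2) ℂ) :
    Matrix (Fin (2 * n)) (Fin (2 * n)) ℂ :=
  Matrix.of fun j k =>
    if j < k then Matrix.trace ((γ n j * γ n k)ᴴ * ρ)
    else if k < j then -Matrix.trace ((γ n k * γ n j)ᴴ * ρ)
    else 0

/-- The block matrix `[[M, i·d], [−i·dᵀ, 0]]`. -/
def extBlock {m : ℕ} (M : Matrix (Fin m) (Fin m) ℂ) (d : Fin m → ℂ) :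
    Matrix (Fin (m + 1)) (Fin (m + 1)) ℂ :=
  Matrix.of fun a b =>
    if ha : a.val < m then
      (if hb : b.val < m then M ⟨a, ha⟩ ⟨b, hb⟩ else Complex.I * d ⟨a, ha⟩)
    else (if hb : b.val < m then -(Complex.I * d ⟨b, hb⟩) else 0)

/-- Extended covariance matrix `Σ̃(ρ) = [[Σ(ρ), i·μ(ρ)], [−i·μ(ρ)ᵀ, 0]]`. -/
def extCov (n : ℕ) (ρ : Matrix (Fin n → Fin 2) (Fin n → Fin 2) ℂ) :
    Matrix (Fin (2 * n + 1)) (Fin (2 * n + 1)) ℂ :=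
  extBlock (covMat n ρ) (meanVec n ρ)

/-- Displaced quadratic Hamiltonian exponent
`(1/2) Σ h_{jk} γ_j γ_k + i Σ d_j γ_j`. -/
def quadArg (n : ℕ) (h : Matrix (Fin (2 * n)) (Fin (2 * n)) ℝ) (d : Fin (2 * n) → ℝ) :
    Matrix (Fin n → Fin 2) (Fin n → Fin 2) ℂ :=
  (1 / 2 : ℂ) • ∑ j, ∑ k, (h j k : ℂ) • (γ n j * γ n k)
    + Complex.I • ∑ j, (d j : ℂ) • γ n j

/-- The displaced Gaussian unitary `U = exp((1/2) Σ h_{jk} γ_jγ_k + i Σ d_j γ_j)`. -/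
def dgUnitary (n : ℕ) (h : Matrix (Fin (2 * n)) (Fin (2 * n)) ℝ) (d : Fin (2 * n) → ℝ) :
    Matrix (Fin n → Fin 2) (Fin n → Fin 2) ℂ :=
  NormedSpace.exp (quadArg n h d)

/-- The real block matrix `[[h, −d], [dᵀ, 0]]`. -/
def extBlockR {m : ℕ} (h : Matrix (Fin m) (Fin m) ℝ) (d : Fin m → ℝ) :
    Matrix (Fin (m + 1)) (Fin (m + 1)) ℝ :=
  Matrix.of fun a b =>
    if ha : a.val < m then
      (if hb : b.val < m then h ⟨a, ha⟩ ⟨b, hb⟩ else -d ⟨a, ha⟩)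
    else (if hb : b.val < m then d ⟨b, hb⟩ else 0)

/-- The rotation `R(h,d) = exp(2·[[h, −d], [dᵀ, 0]]) ∈ SO(2n+1, ℝ)`. -/
def Rmat (n : ℕ) (h : Matrix (Fin (2 * n)) (Fin (2 * n)) ℝ) (d : Fin (2 * n) → ℝ) :
    Matrix (Fin (2 * n + 1)) (Fin (2 * n + 1)) ℝ :=
  NormedSpace.exp ((2 : ℝ) • extBlockR h d)

/-- The Pfaffian of a `k × k` matrix (zero if `k` is odd; 1 for the empty matrix). -/
def pf {k : ℕ} (B : Matrix (Fin k) (Fin k) ℂ) : ℂ :=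
  if h : k % 2 = 0 then
    ((2 : ℂ) ^ (k / 2) * ((k / 2).factorial : ℂ))⁻¹ *
      ∑ σ : Equiv.Perm (Fin k), (Equiv.Perm.sign σ : ℂ) *
        ∏ l : Fin (k / 2),
          B (σ ⟨2 * l.val, by have := l.isLt; omega⟩)
            (σ ⟨2 * l.val + 1, by have := l.isLt; omega⟩)
  else 0

/-- Restriction `B|_J` of a matrix to the rows and columns indexed by `J` (in order). -/
def restr {N : ℕ} (B : Matrix (Fin N) (Fin N) ℂ) (J : Finset (Fin N)) :
    Matrix (Fin J.card) (Fin J.card) ℂ :=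
  B.submatrix (J.orderEmbOfFin rfl) (J.orderEmbOfFin rfl)

/-- `J̃ = J` if `|J|` even, `J ∪ {2n+1}` if `|J|` odd. -/
def tilde {n : ℕ} (J : Finset (Fin (2 * n))) : Finset (Fin (2 * n + 1)) :=
  if Odd J.card then insert (Fin.last (2 * n)) (J.map Fin.castSuccEmb)
  else J.map Fin.castSuccEmb

end

end DG
namespace DG
noncomputable section

/-- The quadratic polynomial `(1/2) Σ M_{jk} γ_jγ_k + Σ v_j γ_j` (complex coefficients). -/
def quadPolyC (n : ℕ) (M : Matrix (Fin (2 * n)) (Fin (2 * n)) ℂ) (v : Fin (2 * n) → ℂ) :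
    Matrix (Fin n → Fin 2) (Fin n → Fin 2) ℂ :=
  (1 / 2 : ℂ) • ∑ j, ∑ k, M j k • (γ n j * γ n k) + ∑ j, v j • γ n j

/-- The Hermitian quadratic Hamiltonian `H = (i/2) Σ h_{jk} γ_jγ_k + Σ d_j γ_j`. -/
def hamil (n : ℕ) (h : Matrix (Fin (2 * n)) (Fin (2 * n)) ℝ) (d : Fin (2 * n) → ℝ) :
    Matrix (Fin n → Fin 2) (Fin n → Fin 2) ℂ :=
  (Complex.I / 2) • ∑ j, ∑ k, (h j k : ℂ) • (γ n j * γ n k) + ∑ j, (d j : ℂ) • γ n j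

/-- The diagonalized Gaussian state `⊗_j (I + λ_j Z)/2`. -/
def diagGauss (n : ℕ) (l : Fin n → ℝ) : Matrix (Fin n → Fin 2) (Fin n → Fin 2) ℂ :=
  tensor fun j => (2 : ℂ)⁻¹ • (1 + (l j : ℂ) • PZ)

/-- The Pauli `Z` acting on line `j`: `Z_j = I^{⊗(j-1)} ⊗ Z ⊗ I^{⊗(n-j)}`. -/
def Zline (n : ℕ) (j : Fin n) : Matrix (Fin n → Fin 2) (Fin n → Fin 2) ℂ :=
  tensor fun i => if i = j then PZ else 1

/-- Measurement projector `O(K,x) = Π_{j ∈ K} (I + (−1)^{x_j} Z_j)/2`. -/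
def measOp (n : ℕ) (K : Finset (Fin n)) (x : Fin n → Bool) :
    Matrix (Fin n → Fin 2) (Fin n → Fin 2) ℂ :=
  ((K.sort (· ≤ ·)).map
    (fun j => (2 : ℂ)⁻¹ • (1 + (if x j then (-1 : ℂ) else 1) • Zline n j))).prod

/-- Tensoring a 2×2 matrix on a new last qubit line: `A ⊗ u`. -/
def extQ {n : ℕ} (A : Matrix (Fin n → Fin 2) (Fin n → Fin 2) ℂ)
    (u : Matrix (Fin 2) (Fin 2) ℂ) :
    Matrix (Fin (n + 1) → Fin 2) (Fin (n + 1) → Fin 2) ℂ :=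
  Matrix.of fun a b =>
    A (fun i => a i.castSucc) (fun i => b i.castSucc) * u (a (Fin.last n)) (b (Fin.last n))

/-- The state `|+⟩⟨+|`. -/
def plusState : Matrix (Fin 2) (Fin 2) ℂ := (2 : ℂ)⁻¹ • !![1, 1; 1, 1]

/-- The extended antisymmetric generator `h̃` of the even embedding of a displaced
Gaussian unitary. -/
def htilde {n : ℕ} (h : Matrix (Fin (2 * n)) (Fin (2 * n)) ℝ) (d : Fin (2 * n) → ℝ) :
    Matrix (Fin (2 * (n + 1))) (Fin (2 * (n + 1))) ℝ :=
  Matrix.of fun j k =>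
    if hj : j.val < 2 * n then
      (if hk : k.val < 2 * n then h ⟨j, hj⟩ ⟨k, hk⟩
       else if k.val = 2 * n + 1 then -d ⟨j, hj⟩ else 0)
    else if j.val = 2 * n + 1 then (if hk : k.val < 2 * n then d ⟨k, hk⟩ else 0) else 0

/-- The embedding unitary `V = exp(−i (π/4) γ_{2n+2})` on `n+1` qubits. -/
def embedV (n : ℕ) : Matrix (Fin (n + 1) → Fin 2) (Fin (n + 1) → Fin 2) ℂ :=
  NormedSpace.exp ((-(Real.pi / 4 : ℝ) * Complex.I) • γ (n + 1) ⟨2 * n + 1, by omega⟩)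

end
end DG
/-!
The Jordan–Wigner operators form a Clifford family: `γ_j² = 1` and distinct ones anticommute.
Distinct products `γ_j γ_k` are therefore traceless, so `X ↦ 2⁻ⁿ tr (γ_j X)` are coordinates on
the span `V` of the `γ_j`. From `⁅γ_a γ_b, γ_e⁆ = 2 δ_{be} γ_a - 2 δ_{ae} γ_b`, bracketing with an
element `X` of the span `𝔤` of the quadratic monomials preserves `V`, and by the Leibniz rule the
bracket of two quadratic monomials is again in `𝔤`. Sending `X ∈ 𝔤` to the matrix of `⁅X, -⁆` on
`V` is a Lie algebra homomorphism by the Jacobi identity; it maps `γ_a γ_b` to `2 (E_ab - E_ba)`,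
and `A ↦ ¼ ∑ A_jk γ_j γ_k` inverts it on antisymmetric matrices.
-/

structure IsCliffordFamily {ι R : Type*} [Ring R] (c : ι → R) : Prop where
  mul_self : ∀ j, c j * c j = 1
  anticomm : ∀ ⦃j k⦄, j ≠ k → c j * c k = -(c k * c j)

def quadSpan (K : Type*) {ι R : Type*} [CommRing K] [Ring R] [Algebra K R] [LinearOrder ι]
    (c : ι → R) : Submodule K R :=
  Submodule.span K {A | ∃ a b, a < b ∧ A = c a * c b}

section CliffordFamily

attribute [local instance] LieRing.ofAssociativeRing

namespace IsCliffordFamily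

variable {ι K R : Type*} [Ring R] {c : ι → R}

theorem mul_add_mul [DecidableEq ι] (hc : IsCliffordFamily c) (j k : ι) :
    c j * c k + c k * c j = if j = k then 2 else 0 := by
  by_cases h : j = k
  · subst h; rw [if_pos rfl, hc.mul_self, one_add_one_eq_two]
  · rw [if_neg h, hc.anticomm h, neg_add_cancel]

variable [CommRing K] [Algebra K R]

theorem lie_mul_mul [DecidableEq ι] (hc : IsCliffordFamily c) (a b e : ι) :
    ⁅c a * c b, c e⁆ = (if b = e then 2 else 0 : K) • c a - (if a = e then 2 else 0 : K) • c b := by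
  have h : ⁅c a * c b, c e⁆ = c a * (c b * c e + c e * c b) - (c a * c e + c e * c a) * c b := by
    rw [Ring.lie_def]; noncomm_ring
  rw [h, hc.mul_add_mul, hc.mul_add_mul]
  split_ifs <;> simp [two_smul, two_mul, mul_two]

variable [LinearOrder ι]

theorem lie_mem_span_range (hc : IsCliffordFamily c) {x : R} (hx : x ∈ quadSpan K c) (e : ι) :
    ⁅x, c e⁆ ∈ Submodule.span K (Set.range c) := by
  induction hx using Submodule.span_induction with
  | mem x hx =>
    obtain ⟨a, b, -, rfl⟩ := hx
    rw [hc.lie_mul_mul (K := K)]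
    exact sub_mem (Submodule.smul_mem _ _ (Submodule.subset_span ⟨a, rfl⟩))
      (Submodule.smul_mem _ _ (Submodule.subset_span ⟨b, rfl⟩))
  | zero => rw [zero_lie]; exact zero_mem _
  | add x y _ _ hx hy => rw [add_lie]; exact add_mem hx hy
  | smul r x _ hx => rw [smul_lie]; exact Submodule.smul_mem _ r hx

theorem mul_mem_quadSpan (hc : IsCliffordFamily c) {a b : ι} (h : a ≠ b) :
    c a * c b ∈ quadSpan K c := by
  rcases h.lt_or_gt with h | h
  · exact Submodule.subset_span ⟨a, b, h, rfl⟩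
  · rw [hc.anticomm h.ne']
    exact neg_mem (Submodule.subset_span ⟨b, a, h, rfl⟩)

theorem ite_smul_mul_mem_quadSpan (hc : IsCliffordFamily c) {P : Prop} [Decidable P] (r : K)
    {a b : ι} (h : P → a ≠ b) : (if P then r else 0) • (c a * c b) ∈ quadSpan K c := by
  split_ifs with hP
  · exact Submodule.smul_mem _ r (hc.mul_mem_quadSpan (h hP))
  · rw [zero_smul]; exact zero_mem _

theorem lie_mul_mul_mem_quadSpan (hc : IsCliffordFamily c) {a b a' b' : ι} (hab : a < b)
    (hab' : a' < b') : ⁅c a * c b, c a' * c b'⁆ ∈ quadSpan K c := by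
  by_cases h : a = a' ∧ b = b'
  · obtain ⟨rfl, rfl⟩ := h; rw [lie_self]; exact zero_mem _
  have leibniz :
      ⁅c a * c b, c a' * c b'⁆ = ⁅c a * c b, c a'⁆ * c b' + c a' * ⁅c a * c b, c b'⁆ := by
    simp only [Ring.lie_def]; noncomm_ring
  rw [leibniz, hc.lie_mul_mul (K := K), hc.lie_mul_mul (K := K)]
  simp only [sub_mul, mul_sub, smul_mul_assoc, mul_smul_comm]
  refine add_mem (sub_mem ?_ ?_) (sub_mem ?_ ?_) <;> apply hc.ite_smul_mul_mem_quadSpan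
  · rintro rfl; exact (hab.trans hab').ne
  · rintro rfl rfl; exact h ⟨rfl, rfl⟩
  · rintro rfl rfl; exact h ⟨rfl, rfl⟩
  · rintro rfl; exact (hab'.trans hab).ne

theorem lie_mem_quadSpan (hc : IsCliffordFamily c) {x y : R} (hx : x ∈ quadSpan K c)
    (hy : y ∈ quadSpan K c) : ⁅x, y⁆ ∈ quadSpan K c := by
  induction hx, hy using Submodule.span_induction₂ with
  | mem_mem x y hx hy =>
    obtain ⟨a, b, hab, rfl⟩ := hx
    obtain ⟨a', b', hab', rfl⟩ := hy
    exact hc.lie_mul_mul_mem_quadSpan hab hab'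
  | zero_left => rw [zero_lie]; exact zero_mem _
  | zero_right => rw [lie_zero]; exact zero_mem _
  | add_left _ _ _ _ _ _ h₁ h₂ => rw [add_lie]; exact add_mem h₁ h₂
  | add_right _ _ _ _ _ _ h₁ h₂ => rw [lie_add]; exact add_mem h₁ h₂
  | smul_left r _ _ _ _ h => rw [smul_lie]; exact Submodule.smul_mem _ r h
  | smul_right r _ _ _ _ h => rw [lie_smul]; exact Submodule.smul_mem _ r h

end IsCliffordFamily

section QuadOfMatrix

variable {ι K R : Type*} [Fintype ι] [Field K] [Ring R] [Algebra K R]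

def quadOfMatrix (c : ι → R) : Matrix ι ι K →ₗ[K] R where
  toFun A := (4 : K)⁻¹ • ∑ j, ∑ k, A j k • (c j * c k)
  map_add' A B := by simp [add_smul, Finset.sum_add_distrib]
  map_smul' r A := by simp [Finset.smul_sum, smul_smul, mul_left_comm]

theorem quadOfMatrix_apply (c : ι → R) (A : Matrix ι ι K) :
    quadOfMatrix c A = (4 : K)⁻¹ • ∑ j, ∑ k, A j k • (c j * c k) := rfl

theorem quadOfMatrix_single [DecidableEq ι] (c : ι → R) (a b : ι) (r : K) :
    quadOfMatrix c (Matrix.single a b r) = ((4 : K)⁻¹ * r) • (c a * c b) := by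
  simp [quadOfMatrix_apply, Matrix.single_apply, ite_and, smul_smul]

theorem IsCliffordFamily.quadOfMatrix_mem_quadSpan [LinearOrder ι] [CharZero K] {c : ι → R}
    (hc : IsCliffordFamily c) {A : Matrix ι ι K} (hA : Aᵀ = -A) :
    quadOfMatrix c A ∈ quadSpan K c := by
  refine Submodule.smul_mem _ _ (Submodule.sum_mem _ fun j _ => Submodule.sum_mem _ fun k _ => ?_)
  obtain rfl | h := eq_or_ne j k
  · have : A j j = 0 := CharZero.eq_neg_self_iff.mp (by simpa using congr_fun (congr_fun hA j) j)
    rw [this, zero_smul]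
    exact zero_mem _
  · exact Submodule.smul_mem _ _ (hc.mul_mem_quadSpan h)

end QuadOfMatrix

section Matrix

variable {ι m K : Type*} [Fintype m] [DecidableEq m] [Field K]

def traceCoord (c : ι → Matrix m m K) (j : ι) : Matrix m m K →ₗ[K] K :=
  (Fintype.card m : K)⁻¹ • (Matrix.traceLinearMap m K K ∘ₗ LinearMap.mulLeft K (c j))

theorem traceCoord_apply (c : ι → Matrix m m K) (j : ι) (X : Matrix m m K) :
    traceCoord c j X = (Fintype.card m : K)⁻¹ * (c j * X).trace := rfl

/-- The matrix of `⁅X, -⁆` on the span of a Clifford family `c`. -/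
def adMatrix (c : ι → Matrix m m K) : Matrix m m K →ₗ[K] Matrix ι ι K where
  toFun X := Matrix.of fun j e => traceCoord c j ⁅X, c e⁆
  map_add' X Y := by ext; simp [add_lie]
  map_smul' r X := by ext; simp [smul_lie]

theorem adMatrix_apply (c : ι → Matrix m m K) (X : Matrix m m K) (j e : ι) :
    adMatrix c X j e = traceCoord c j ⁅X, c e⁆ := rfl

theorem transpose_adMatrix (c : ι → Matrix m m K) (X : Matrix m m K) :
    (adMatrix c X)ᵀ = -adMatrix c X := by
  ext j e
  simp only [Matrix.transpose_apply, Matrix.neg_apply, adMatrix_apply, traceCoord_apply,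
    Ring.lie_def, mul_sub, Matrix.trace_sub, ← Matrix.mul_assoc]
  rw [Matrix.trace_mul_cycle (c e) X (c j), Matrix.trace_mul_cycle (c j) X (c e)]
  ring

namespace IsCliffordFamily

variable [CharZero K] [Nonempty m] {c : ι → Matrix m m K}

theorem traceCoord_apply_self [DecidableEq ι] (hc : IsCliffordFamily c) (j k : ι) :
    traceCoord c j (c k) = if j = k then 1 else 0 := by
  rw [traceCoord_apply]
  split_ifs with h
  · rw [h, hc.mul_self, Matrix.trace_one,
      inv_mul_cancel₀ (Nat.cast_ne_zero.mpr Fintype.card_ne_zero)]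
  · have : (c j * c k).trace = -(c j * c k).trace := by
      rw [← Matrix.trace_neg, ← hc.anticomm (Ne.symm h), Matrix.trace_mul_comm]
    rw [CharZero.eq_neg_self_iff.mp this, mul_zero]

theorem adMatrix_mul_mul [DecidableEq ι] (hc : IsCliffordFamily c) (a b : ι) :
    adMatrix c (c a * c b) = (2 : K) • (Matrix.single a b 1 - Matrix.single b a 1) := by
  ext j e
  simp only [adMatrix_apply, hc.lie_mul_mul (K := K), map_sub, map_smul,
    hc.traceCoord_apply_self, Matrix.smul_apply, Matrix.sub_apply, Matrix.single_apply, @eq_comm _ j]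
  split_ifs <;> subst_vars <;> simp at * <;> tauto

variable [Fintype ι]

theorem sum_traceCoord_smul [DecidableEq ι] (hc : IsCliffordFamily c) {X : Matrix m m K}
    (hX : X ∈ Submodule.span K (Set.range c)) : ∑ j, traceCoord c j X • c j = X := by
  have : Set.EqOn ⇑(∑ j, (traceCoord c j).smulRight (c j)) ⇑(LinearMap.id : Matrix m m K →ₗ[K] _)
      (Set.range c) := by
    rintro _ ⟨k, rfl⟩
    simp [hc.traceCoord_apply_self]
  simpa using LinearMap.eqOn_span' this hX

theorem lie_eq_sum_adMatrix [LinearOrder ι] (hc : IsCliffordFamily c) {X : Matrix m m K}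
    (hX : X ∈ quadSpan K c) (e : ι) : ⁅X, c e⁆ = ∑ j, adMatrix c X j e • c j :=
  (hc.sum_traceCoord_smul (hc.lie_mem_span_range hX e)).symm

theorem adMatrix_lie [LinearOrder ι] (hc : IsCliffordFamily c) {X Y : Matrix m m K}
    (hX : X ∈ quadSpan K c) (hY : Y ∈ quadSpan K c) :
    adMatrix c ⁅X, Y⁆ = ⁅adMatrix c X, adMatrix c Y⁆ := by
  have coord_lie_lie : ∀ {X Y : Matrix m m K}, Y ∈ quadSpan K c → ∀ j e,
      traceCoord c j ⁅X, ⁅Y, c e⁆⁆ = (adMatrix c X * adMatrix c Y) j e := by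
    intro X Y hY j e
    simp only [hc.lie_eq_sum_adMatrix hY e, lie_sum, lie_smul, map_sum, map_smul, smul_eq_mul,
      Matrix.mul_apply, ← adMatrix_apply, mul_comm]
  ext j e
  rw [adMatrix_apply, lie_lie, map_sub, coord_lie_lie hY, coord_lie_lie hX, Ring.lie_def,
    Matrix.sub_apply]

theorem leftInvOn_quadOfMatrix_adMatrix [LinearOrder ι] (hc : IsCliffordFamily c) :
    Set.LeftInvOn (quadOfMatrix c) (adMatrix c) (quadSpan K c) := by
  have : Set.EqOn ⇑((quadOfMatrix c).comp (adMatrix c)) ⇑(LinearMap.id : Matrix m m K →ₗ[K] _)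
      {A | ∃ a b, a < b ∧ A = c a * c b} := by
    rintro _ ⟨a, b, hab, rfl⟩
    simp only [LinearMap.comp_apply, hc.adMatrix_mul_mul, map_smul, map_sub, quadOfMatrix_single,
      hc.anticomm hab.ne', LinearMap.id_apply]
    module
  exact fun X hX => LinearMap.eqOn_span' this hX

theorem adMatrix_quadOfMatrix [DecidableEq ι] (hc : IsCliffordFamily c) {A : Matrix ι ι K}
    (hA : Aᵀ = -A) : adMatrix c (quadOfMatrix c A) = A := by
  ext i l
  have hli : A l i = -A i l := by simpa using congr_fun (congr_fun hA i) l
  simp only [quadOfMatrix_apply, map_smul, map_sum, hc.adMatrix_mul_mul, Matrix.smul_apply,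
    Matrix.sum_apply, Matrix.sub_apply, Matrix.single_apply, smul_eq_mul, mul_sub, mul_ite, ite_and,
    mul_one, mul_zero, Finset.sum_sub_distrib, Finset.sum_ite_eq', Finset.mem_univ, if_true]
  rw [Finset.sum_comm]
  simp only [Finset.sum_ite_eq', Finset.mem_univ, if_true, hli]
  ring

theorem linearIndependent_mul [LinearOrder ι] (hc : IsCliffordFamily c) :
    LinearIndependent K (fun p : {p : ι × ι // p.1 < p.2} => c p.1.1 * c p.1.2) := by
  rw [Fintype.linearIndependent_iff]
  intro g hg q
  have entry : ∀ p : {p : ι × ι // p.1 < p.2},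
      adMatrix c (c p.1.1 * c p.1.2) q.1.1 q.1.2 = if p = q then 2 else 0 := by
    intro p
    have : ¬(p.1.2 = q.1.1 ∧ p.1.1 = q.1.2) := fun ⟨h₁, h₂⟩ =>
      lt_asymm p.2 (by rw [h₁, h₂]; exact q.2)
    simp [hc.adMatrix_mul_mul, Matrix.single_apply, this, Subtype.ext_iff, Prod.ext_iff]
  simpa [map_sum, Matrix.sum_apply, entry] using congr_arg (fun X => adMatrix c X q.1.1 q.1.2) hg

end IsCliffordFamily

end Matrix

end CliffordFamily

namespace DG

theorem PX_mul_PX : PX * PX = 1 := by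
  ext i j; fin_cases i <;> fin_cases j <;> simp [PX, Matrix.mul_apply, Fin.sum_univ_two]

theorem PY_mul_PY : PY * PY = 1 := by
  ext i j; fin_cases i <;> fin_cases j <;> simp [PY, Matrix.mul_apply, Fin.sum_univ_two]

theorem PZ_mul_PZ : PZ * PZ = 1 := by
  ext i j; fin_cases i <;> fin_cases j <;> simp [PZ, Matrix.mul_apply, Fin.sum_univ_two]

theorem PX_mul_PZ : PX * PZ = -(PZ * PX) := by
  ext i j; fin_cases i <;> fin_cases j <;> simp [PX, PZ, Matrix.mul_apply, Fin.sum_univ_two]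

theorem PY_mul_PZ : PY * PZ = -(PZ * PY) := by
  ext i j; fin_cases i <;> fin_cases j <;> simp [PY, PZ, Matrix.mul_apply, Fin.sum_univ_two]

theorem PX_mul_PY : PX * PY = -(PY * PX) := by
  ext i j; fin_cases i <;> fin_cases j <;> simp [PX, PY, Matrix.mul_apply, Fin.sum_univ_two]

theorem tensor_mul {n : ℕ} (f g : Fin n → Matrix (Fin 2) (Fin 2) ℂ) :
    tensor f * tensor g = tensor (fun i => f i * g i) := by
  ext x y
  simp only [tensor, Matrix.mul_apply, Matrix.of_apply, Finset.prod_univ_sum,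
    ← Finset.prod_mul_distrib, Fintype.piFinset_univ]

theorem tensor_one {n : ℕ} : tensor (fun _ : Fin n => (1 : Matrix (Fin 2) (Fin 2) ℂ)) = 1 := by
  ext x y
  simp only [tensor, Matrix.of_apply, Matrix.one_apply, Finset.prod_ite_zero,
    Finset.prod_const_one, Finset.mem_univ, forall_const, funext_iff]

theorem tensor_smul {n : ℕ} (s : Fin n → ℂ) (f : Fin n → Matrix (Fin 2) (Fin 2) ℂ) :
    tensor (fun i => s i • f i) = (∏ i, s i) • tensor f := by
  ext x y
  simp [tensor, Finset.prod_mul_distrib]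

def jwFactor (j i : ℕ) : Matrix (Fin 2) (Fin 2) ℂ :=
  if i < j / 2 then PZ else if i = j / 2 then (if j % 2 = 0 then PX else PY) else 1

theorem γ_eq_tensor (n : ℕ) (j : Fin (2 * n)) : γ n j = tensor fun i => jwFactor j i := rfl

theorem jwFactor_mul_self (j i : ℕ) : jwFactor j i * jwFactor j i = 1 := by
  unfold jwFactor
  split_ifs <;> simp [PX_mul_PX, PY_mul_PY, PZ_mul_PZ]

theorem jwFactor_mul_jwFactor_of_lt {j k : ℕ} (h : j < k) (i : ℕ) :
    jwFactor j i * jwFactor k i =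
      (if i = j / 2 then -1 else 1 : ℂ) • (jwFactor k i * jwFactor j i) := by
  unfold jwFactor
  rcases lt_trichotomy i (j / 2) with hi | rfl | hi
  · simp [hi, hi.ne, hi.trans_le (Nat.div_le_div_right h.le)]
  · rcases (Nat.div_le_div_right (c := 2) h.le).lt_or_eq with hjk | hjk
    · simp only [lt_irrefl, if_false, if_true, hjk]
      split_ifs <;> simp [PX_mul_PZ, PY_mul_PZ]
    · have hj : j % 2 = 0 := by omega
      have hk : k % 2 ≠ 0 := by omega
      simp [← hjk, hj, hk, PX_mul_PY]
  · simp [hi.not_gt, hi.ne']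

theorem isCliffordFamily_γ (n : ℕ) : IsCliffordFamily (γ n) where
  mul_self j := by simp only [γ_eq_tensor, tensor_mul, jwFactor_mul_self, tensor_one]
  anticomm j k hjk := by
    wlog h : j < k generalizing j k
    · rw [this k j hjk.symm (lt_of_le_of_ne (not_lt.mp h) hjk.symm), neg_neg]
    have hj : (j : ℕ) / 2 < n := by omega
    have sign : ∏ i : Fin n, (if (i : ℕ) = j / 2 then -1 else 1 : ℂ) = -1 := by
      simp_rw [← Fin.ext_iff (b := ⟨j / 2, hj⟩)]
      simp
    rw [γ_eq_tensor, γ_eq_tensor, tensor_mul, tensor_mul]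
    simp_rw [jwFactor_mul_jwFactor_of_lt (Fin.lt_def.mp h)]
    rw [tensor_smul, sign, neg_one_smul]

end DG

open DG in
theorem statement1_general (n : ℕ) :
    LinearIndependent ℂ
      (fun p : {p : Fin (2 * n) × Fin (2 * n) // p.1 < p.2} => γ n p.1.1 * γ n p.1.2) ∧
    (∀ x ∈ Submodule.span ℂ
        {A : Matrix (Fin n → Fin 2) (Fin n → Fin 2) ℂ | ∃ a b, a < b ∧ A = γ n a * γ n b},
      ∀ y ∈ Submodule.span ℂ
        {A : Matrix (Fin n → Fin 2) (Fin n → Fin 2) ℂ | ∃ a b, a < b ∧ A = γ n a * γ n b},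
        ⁅x, y⁆ ∈ Submodule.span ℂ
          {A : Matrix (Fin n → Fin 2) (Fin n → Fin 2) ℂ | ∃ a b, a < b ∧ A = γ n a * γ n b}) ∧
    ∃ φ : ↥(Submodule.span ℂ
            {A : Matrix (Fin n → Fin 2) (Fin n → Fin 2) ℂ | ∃ a b, a < b ∧ A = γ n a * γ n b})
          →ₗ[ℂ] Matrix (Fin (2 * n)) (Fin (2 * n)) ℂ,
      (∀ (a b : Fin (2 * n)) (_ : a < b)
          (hmem : γ n a * γ n b ∈ Submodule.span ℂ
            {A : Matrix (Fin n → Fin 2) (Fin n → Fin 2) ℂ | ∃ a b, a < b ∧ A = γ n a * γ n b}),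
        φ ⟨γ n a * γ n b, hmem⟩ =
          (2 : ℂ) • (Matrix.single a b 1 - Matrix.single b a 1)) ∧
      Function.Injective φ ∧
      (∀ A : Matrix (Fin (2 * n)) (Fin (2 * n)) ℂ, Aᵀ = -A ↔ A ∈ Set.range φ) ∧
      (∀ (x y : ↥(Submodule.span ℂ
            {A : Matrix (Fin n → Fin 2) (Fin n → Fin 2) ℂ | ∃ a b, a < b ∧ A = γ n a * γ n b}))
          (hxy : ⁅(x : Matrix (Fin n → Fin 2) (Fin n → Fin 2) ℂ), (y : Matrix (Fin n → Fin 2) (Fin n → Fin 2) ℂ)⁆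
              ∈ Submodule.span ℂ
            {A : Matrix (Fin n → Fin 2) (Fin n → Fin 2) ℂ | ∃ a b, a < b ∧ A = γ n a * γ n b}),
        φ ⟨⁅(x : Matrix (Fin n → Fin 2) (Fin n → Fin 2) ℂ), (y : Matrix (Fin n → Fin 2) (Fin n → Fin 2) ℂ)⁆, hxy⟩
          = ⁅φ x, φ y⁆) := by
  have hγ := isCliffordFamily_γ n
  refine ⟨hγ.linearIndependent_mul, fun x hx y hy => hγ.lie_mem_quadSpan hx hy,
    (adMatrix (γ n)).comp (quadSpan ℂ (γ n)).subtype, fun a b _ _ => hγ.adMatrix_mul_mul a b,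
    fun x y hxy => Subtype.ext (hγ.leftInvOn_quadOfMatrix_adMatrix.injOn x.2 y.2 hxy),
    fun A => ⟨fun hA => ⟨⟨quadOfMatrix (γ n) A, hγ.quadOfMatrix_mem_quadSpan hA⟩,
      hγ.adMatrix_quadOfMatrix hA⟩, ?_⟩,
    fun x y _ => hγ.adMatrix_lie x.2 y.2⟩
  rintro ⟨x, rfl⟩
  exact transpose_adMatrix _ _

open DG in
/-- the quadratic monomials `γ_aγ_b` (`a < b`) are linearly independent,
their span is a Lie subalgebra of the matrices under the commutator bracket, and
`γ_aγ_b ↦ 2(E_{ab} − E_{ba})` determines a Lie algebra isomorphism onto the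
antisymmetric complex `2n × 2n` matrices. -/
theorem statement1 (n : ℕ) (hn : 1 ≤ n) :
    LinearIndependent ℂ
      (fun p : {p : Fin (2 * n) × Fin (2 * n) // p.1 < p.2} => γ n p.1.1 * γ n p.1.2) ∧
    (∀ x ∈ Submodule.span ℂ
        {A : Matrix (Fin n → Fin 2) (Fin n → Fin 2) ℂ | ∃ a b, a < b ∧ A = γ n a * γ n b},
      ∀ y ∈ Submodule.span ℂ
        {A : Matrix (Fin n → Fin 2) (Fin n → Fin 2) ℂ | ∃ a b, a < b ∧ A = γ n a * γ n b},
        ⁅x, y⁆ ∈ Submodule.span ℂ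
          {A : Matrix (Fin n → Fin 2) (Fin n → Fin 2) ℂ | ∃ a b, a < b ∧ A = γ n a * γ n b}) ∧
    ∃ φ : ↥(Submodule.span ℂ
            {A : Matrix (Fin n → Fin 2) (Fin n → Fin 2) ℂ | ∃ a b, a < b ∧ A = γ n a * γ n b})
          →ₗ[ℂ] Matrix (Fin (2 * n)) (Fin (2 * n)) ℂ,
      (∀ (a b : Fin (2 * n)) (_ : a < b)
          (hmem : γ n a * γ n b ∈ Submodule.span ℂ
            {A : Matrix (Fin n → Fin 2) (Fin n → Fin 2) ℂ | ∃ a b, a < b ∧ A = γ n a * γ n b}),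
        φ ⟨γ n a * γ n b, hmem⟩ =
          (2 : ℂ) • (Matrix.single a b 1 - Matrix.single b a 1)) ∧
      Function.Injective φ ∧
      (∀ A : Matrix (Fin (2 * n)) (Fin (2 * n)) ℂ, Aᵀ = -A ↔ A ∈ Set.range φ) ∧
      (∀ (x y : ↥(Submodule.span ℂ
            {A : Matrix (Fin n → Fin 2) (Fin n → Fin 2) ℂ | ∃ a b, a < b ∧ A = γ n a * γ n b}))
          (hxy : ⁅(x : Matrix (Fin n → Fin 2) (Fin n → Fin 2) ℂ), (y : Matrix (Fin n → Fin 2) (Fin n → Fin 2) ℂ)⁆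
              ∈ Submodule.span ℂ
            {A : Matrix (Fin n → Fin 2) (Fin n → Fin 2) ℂ | ∃ a b, a < b ∧ A = γ n a * γ n b}),
        φ ⟨⁅(x : Matrix (Fin n → Fin 2) (Fin n → Fin 2) ℂ), (y : Matrix (Fin n → Fin 2) (Fin n → Fin 2) ℂ)⁆, hxy⟩
          = ⁅φ x, φ y⁆) :=
  statement1_general n
end

section
/- Let A be a complex antisymmetric 2n×2n matrix and R ∈ SO(2n,ℝ). Then for every increasing tuple K ⊆ {1,…,2n} of size 2m: Pf((R A Rᵀ)|_K) = Σ_J Pf(A|_J) · det(R[K,J]), where the sum is over all increasing tuples J ⊆ {1,…,2n} of size 2m and R[K,J] denotes the 2m×2m submatrix (R_{K_a, J_b})_{a,b}. -/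
/-!
Expanding every entry of `S * A * Sᵀ` bilinearly writes the (unnormalised) Pfaffian of
`S * A * Sᵀ` as a sum, over all index maps `g : Fin k → Fin N`, of `∏ a, S a (g a)` times the
Pfaffian of `A` pulled back along `g`. The pulled-back Pfaffian is alternating in `g`, so only
injective `g` contribute; such a `g` is uniquely the increasing enumeration of a `k`-subset `J`
composed with a permutation `π`, and summing `sign π * ∏ a, S a (J (π a))` over `π` gives the
minor `det S[·, J]`. With `S` the rows `K` of `R` this is the rotation formula.
-/

open scoped Matrix ComplexOrder

namespace DG

open Equiv Finset

section Pairing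

variable {k : ℕ}

def pairFst (l : Fin (k / 2)) : Fin k := ⟨2 * l.val, by have := l.isLt; omega⟩

def pairSnd (l : Fin (k / 2)) : Fin k := ⟨2 * l.val + 1, by have := l.isLt; omega⟩

def pairEquiv (hk : k % 2 = 0) : Fin (k / 2) × Fin 2 ≃ Fin k :=
  finProdFinEquiv.trans (finCongr (by omega))

@[simp]
lemma pairEquiv_zero (hk : k % 2 = 0) (l : Fin (k / 2)) : pairEquiv hk (l, 0) = pairFst l := by
  ext; simp [pairEquiv, pairFst, finProdFinEquiv]

@[simp]
lemma pairEquiv_one (hk : k % 2 = 0) (l : Fin (k / 2)) : pairEquiv hk (l, 1) = pairSnd l := by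
  ext; simp [pairEquiv, pairSnd, finProdFinEquiv]; omega

lemma prod_eq_prod_pairs {M : Type*} [CommMonoid M] (hk : k % 2 = 0) (f : Fin k → M) :
    ∏ a, f a = ∏ l, f (pairFst l) * f (pairSnd l) := by
  rw [← (pairEquiv hk).prod_comp, Fintype.prod_prod_type]
  simp [Fin.prod_univ_two]

def pairsEquiv (hk : k % 2 = 0) (ι : Type*) : (Fin k → ι) ≃ (Fin (k / 2) → ι × ι) :=
  ((pairEquiv hk).symm.arrowCongr (Equiv.refl ι)).trans <|
    (Equiv.curry _ _ _).trans ((Equiv.refl _).arrowCongr (piFinTwoEquiv fun _ => ι))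

@[simp]
lemma pairsEquiv_apply (hk : k % 2 = 0) {ι : Type*} (g : Fin k → ι) (l : Fin (k / 2)) :
    pairsEquiv hk ι g l = (g (pairFst l), g (pairSnd l)) := by
  simp [pairsEquiv]

end Pairing

section PfSum

variable {R : Type*} [CommRing R] {k : ℕ}

def pfSum (B : Matrix (Fin k) (Fin k) R) : R :=
  ∑ σ : Perm (Fin k), (Perm.sign σ : R) * ∏ l : Fin (k / 2), B (σ (pairFst l)) (σ (pairSnd l))

lemma pfSum_submatrix_perm (B : Matrix (Fin k) (Fin k) R) (π : Perm (Fin k)) :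
    pfSum (B.submatrix π π) = Perm.sign π * pfSum B := by
  rw [pfSum, pfSum, mul_sum]
  conv_rhs => rw [← Equiv.sum_comp (Equiv.mulLeft π)]
  refine sum_congr rfl fun σ _ => ?_
  have hsign : (Perm.sign π : R) * Perm.sign (π * σ) = Perm.sign σ := by
    rw [Perm.sign_mul, Units.val_mul, Int.cast_mul, ← mul_assoc, ← Int.cast_mul, ← Units.val_mul,
      Int.units_mul_self, Units.val_one, Int.cast_one, one_mul]
  simp only [coe_mulLeft, Perm.coe_mul, Function.comp_apply, Matrix.submatrix_apply]
  rw [← mul_assoc, hsign]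

lemma pfSum_submatrix_eq_zero_of_not_injective [NoZeroDivisors R] [CharZero R] {ι : Type*}
    (A : Matrix ι ι R) {g : Fin k → ι} (hg : ¬ Function.Injective g) :
    pfSum (A.submatrix g g) = 0 := by
  obtain ⟨a, b, hgab, hab⟩ : ∃ a b, g a = g b ∧ a ≠ b := by
    simpa [Function.Injective] using hg
  have hswap : g ∘ swap a b = g := by
    funext x
    rcases eq_or_ne x a with rfl | hxa
    · simp [hgab]
    rcases eq_or_ne x b with rfl | hxb
    · simp [hgab]
    · simp [swap_apply_of_ne_of_ne hxa hxb]
  have h := pfSum_submatrix_perm (A.submatrix g g) (swap a b)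
  rw [Matrix.submatrix_submatrix, hswap, Perm.sign_swap hab, Units.val_neg, Units.val_one,
    Int.cast_neg, Int.cast_one, neg_one_mul] at h
  exact self_eq_neg.mp h

lemma prod_pairs_mul_mul_transpose {ι : Type*} [Fintype ι] [DecidableEq ι] (hk : k % 2 = 0)
    (S : Matrix (Fin k) ι R) (A : Matrix ι ι R) :
    ∏ l : Fin (k / 2), (S * A * Sᵀ) (pairFst l) (pairSnd l) =
      ∑ g : Fin k → ι, (∏ a, S a (g a)) * ∏ l, A (g (pairFst l)) (g (pairSnd l)) := by
  have hentry : ∀ a b, (S * A * Sᵀ) a b = ∑ p : ι × ι, S a p.1 * A p.1 p.2 * S b p.2 := by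
    intro a b
    simp only [Matrix.mul_apply, Matrix.transpose_apply, sum_mul, Fintype.sum_prod_type]
    exact sum_comm
  simp only [hentry, Fintype.prod_sum]
  rw [← Equiv.sum_comp (pairsEquiv hk ι)]
  refine sum_congr rfl fun g _ => ?_
  rw [prod_eq_prod_pairs hk, ← prod_mul_distrib]
  refine prod_congr rfl fun l _ => ?_
  simp only [pairsEquiv_apply]
  ring

lemma pfSum_mul_mul_transpose {ι : Type*} [Fintype ι] [DecidableEq ι] (hk : k % 2 = 0)
    (S : Matrix (Fin k) ι R) (A : Matrix ι ι R) :
    pfSum (S * A * Sᵀ) = ∑ g : Fin k → ι, (∏ a, S a (g a)) * pfSum (A.submatrix g g) := by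
  have hσ : ∀ σ : Perm (Fin k), ∏ l, (S * A * Sᵀ) (σ (pairFst l)) (σ (pairSnd l)) =
      ∑ g : Fin k → ι, (∏ a, S a (g a)) * ∏ l, A (g (σ (pairFst l))) (g (σ (pairSnd l))) := by
    intro σ
    have hS := prod_pairs_mul_mul_transpose hk (S.submatrix σ id) A
    have hentry : ∀ x y, (S.submatrix σ id * A * (S.submatrix σ id)ᵀ) x y =
        (S * A * Sᵀ) (σ x) (σ y) := by
      simp [Matrix.mul_apply]
    rw [← Equiv.sum_comp (σ.arrowCongr (Equiv.refl ι)).symm] at hS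
    simp only [hentry] at hS
    rw [hS]
    refine sum_congr rfl fun g _ => ?_
    simp [Equiv.prod_comp σ (fun a => S a (g a))]
  simp only [pfSum, hσ, mul_sum, Matrix.submatrix_apply]
  rw [sum_comm]
  refine sum_congr rfl fun g _ => sum_congr rfl fun σ _ => ?_
  ring

end PfSum

section InjectiveFunctions

variable {k N : ℕ}

lemma image_orderEmbOfFin_comp_perm (J : Finset (Fin N)) (hJ : J.card = k) (π : Perm (Fin k)) :
    univ.image (J.orderEmbOfFin hJ ∘ π) = J := by
  apply coe_injective
  rw [coe_image, coe_univ, Set.image_univ, EquivLike.range_comp, range_orderEmbOfFin]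

lemma exists_orderEmbOfFin_comp_perm_eq {g : Fin k → Fin N} (hg : Function.Injective g) :
    ∃ (hcard : (univ.image g).card = k) (π : Perm (Fin k)),
      (univ.image g).orderEmbOfFin hcard ∘ π = g := by
  have hcard : (univ.image g).card = k := by
    rw [card_image_of_injective _ hg, card_fin]
  set e := (univ.image g).orderIsoOfFin hcard
  let p : Fin k → Fin k := fun a => e.symm ⟨g a, mem_image_of_mem g (mem_univ a)⟩
  have hp : Function.Injective p := fun a b hab => hg <| by
    simpa [p] using congrArg (fun x => (e x : Fin N)) hab
  refine ⟨hcard, Equiv.ofBijective p hp.bijective_of_finite, funext fun a => ?_⟩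
  simp [p, e, ← coe_orderIsoOfFin_apply]

lemma sum_filter_injective_eq_sum_orderEmbOfFin_comp {β : Type*} [AddCommMonoid β]
    (F : (Fin k → Fin N) → β) :
    ∑ g ∈ univ.filter Function.Injective, F g =
      ∑ J : {J : Finset (Fin N) // J.card = k}, ∑ π : Perm (Fin k),
        F (J.1.orderEmbOfFin J.2 ∘ π) := by
  rw [← Fintype.sum_prod_type']
  symm
  refine sum_bij (fun p _ => p.1.1.orderEmbOfFin p.1.2 ∘ p.2) ?_ ?_ ?_ (fun _ _ => rfl)
  · intro p _
    simpa using (p.1.1.orderEmbOfFin p.1.2).injective.comp p.2.injective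
  · rintro ⟨⟨J₁, h₁⟩, π₁⟩ _ ⟨⟨J₂, h₂⟩, π₂⟩ _ h
    obtain rfl : J₁ = J₂ := by
      rw [← image_orderEmbOfFin_comp_perm J₁ h₁ π₁, ← image_orderEmbOfFin_comp_perm J₂ h₂ π₂]
      exact congrArg (univ.image ·) h
    obtain rfl : π₁ = π₂ := Equiv.ext fun a => (J₁.orderEmbOfFin h₁).injective (congrFun h a)
    rfl
  · intro g hg
    obtain ⟨hcard, π, hπ⟩ := exists_orderEmbOfFin_comp_perm_eq (by simpa using hg)
    exact ⟨(⟨_, hcard⟩, π), mem_univ _, hπ⟩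

end InjectiveFunctions

section Pfaffian

variable {k N : ℕ}

lemma pf_eq_inv_mul_pfSum (hk : k % 2 = 0) (B : Matrix (Fin k) (Fin k) ℂ) :
    pf B = ((2 : ℂ) ^ (k / 2) * (k / 2).factorial)⁻¹ * pfSum B := by
  rw [pf, dif_pos hk]
  rfl

lemma pf_eq_zero_of_odd (hk : Odd k) (B : Matrix (Fin k) (Fin k) ℂ) : pf B = 0 :=
  dif_neg (by rw [Nat.odd_iff.mp hk]; decide)

lemma pfSum_submatrix_orderEmbOfFin (hk : k % 2 = 0) (A : Matrix (Fin N) (Fin N) ℂ)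
    (J : Finset (Fin N)) (hJ : J.card = k) :
    pfSum (A.submatrix (J.orderEmbOfFin hJ) (J.orderEmbOfFin hJ)) =
      (2 : ℂ) ^ (k / 2) * (k / 2).factorial * pf (restr A J) := by
  subst hJ
  rw [pf_eq_inv_mul_pfSum hk, mul_inv_cancel_left₀ (by positivity)]
  rfl

lemma det_submatrix_orderEmbOfFin (S : Matrix (Fin k) (Fin N) ℂ) (J : Finset (Fin N))
    (hJ : J.card = k) :
    (S.submatrix id (J.orderEmbOfFin hJ)).det =
      ∑ π : Perm (Fin k), (Perm.sign π : ℂ) * ∏ a, S a (J.orderEmbOfFin hJ (π a)) := by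
  rw [← Matrix.det_transpose, Matrix.det_apply]
  simp [Units.smul_def]

lemma restr_mul_mul_transpose (M A : Matrix (Fin N) (Fin N) ℂ) (K : Finset (Fin N)) :
    restr (M * A * Mᵀ) K =
      M.submatrix (K.orderEmbOfFin rfl) id * A * (M.submatrix (K.orderEmbOfFin rfl) id)ᵀ := by
  ext
  simp [restr, Matrix.mul_apply]

theorem pf_mul_mul_transpose (S : Matrix (Fin k) (Fin N) ℂ) (A : Matrix (Fin N) (Fin N) ℂ) :
    pf (S * A * Sᵀ) = ∑ J : {J : Finset (Fin N) // J.card = k},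
      pf (restr A J.1) * (S.submatrix id (J.1.orderEmbOfFin J.2)).det := by
  by_cases hk : k % 2 = 0
  swap
  · have hodd : Odd k := Nat.odd_iff.mpr (by omega)
    rw [pf_eq_zero_of_odd hodd]
    refine (sum_eq_zero fun J _ => ?_).symm
    rw [pf_eq_zero_of_odd (J.2.symm ▸ hodd), zero_mul]
  set c : ℂ := (2 : ℂ) ^ (k / 2) * (k / 2).factorial
  have hc : c ≠ 0 := by positivity
  calc pf (S * A * Sᵀ)
      = c⁻¹ * ∑ g : Fin k → Fin N, (∏ a, S a (g a)) * pfSum (A.submatrix g g) := by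
        rw [pf_eq_inv_mul_pfSum hk, pfSum_mul_mul_transpose hk]
    _ = c⁻¹ * ∑ g ∈ univ.filter Function.Injective,
          (∏ a, S a (g a)) * pfSum (A.submatrix g g) := by
        rw [sum_filter_of_ne fun g _ hg => ?_]
        by_contra hinj
        rw [pfSum_submatrix_eq_zero_of_not_injective A hinj, mul_zero] at hg
        exact hg rfl
    _ = c⁻¹ * ∑ J : {J : Finset (Fin N) // J.card = k}, c *
          (pf (restr A J.1) * (S.submatrix id (J.1.orderEmbOfFin J.2)).det) := by
        rw [sum_filter_injective_eq_sum_orderEmbOfFin_comp]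
        refine congrArg _ (sum_congr rfl fun J _ => ?_)
        rw [det_submatrix_orderEmbOfFin, mul_sum, mul_sum]
        refine sum_congr rfl fun π _ => ?_
        rw [← Matrix.submatrix_submatrix, pfSum_submatrix_perm,
          pfSum_submatrix_orderEmbOfFin hk A J.1 J.2]
        simp only [Function.comp_apply]
        ring
    _ = _ := by rw [← mul_sum, inv_mul_cancel_left₀ hc]

end Pfaffian

end DG

open DG in
theorem statement6_general (n : ℕ)
    (A : Matrix (Fin (2 * n)) (Fin (2 * n)) ℂ)
    (R : Matrix (Fin (2 * n)) (Fin (2 * n)) ℝ)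
    (K : Finset (Fin (2 * n))) :
    pf (restr ((R.map Complex.ofReal) * A * (R.map Complex.ofReal)ᵀ) K) =
      ∑ J : {J : Finset (Fin (2 * n)) // J.card = K.card},
        pf (restr A J.1) *
          ((R.map Complex.ofReal).submatrix (K.orderEmbOfFin rfl) (J.1.orderEmbOfFin J.2)).det := by
  rw [restr_mul_mul_transpose, pf_mul_mul_transpose]
  rfl

open DG in
/-- Pfaffian rotation identity. For `A` complex antisymmetric and
`R ∈ SO(2n,ℝ)`, for every `K` of size `2m`:
`Pf((RARᵀ)|_K) = Σ_J Pf(A|_J) · det(R[K,J])` over all `J` of size `2m`. -/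
theorem statement6 (n m : ℕ)
    (A : Matrix (Fin (2 * n)) (Fin (2 * n)) ℂ) (hA : Aᵀ = -A)
    (R : Matrix (Fin (2 * n)) (Fin (2 * n)) ℝ) (hR : R * Rᵀ = 1) (hRdet : R.det = 1)
    (K : Finset (Fin (2 * n))) (hK : K.card = 2 * m) :
    pf (restr ((R.map Complex.ofReal) * A * (R.map Complex.ofReal)ᵀ) K) =
      ∑ J : {J : Finset (Fin (2 * n)) // J.card = K.card},
        pf (restr A J.1) *
          ((R.map Complex.ofReal).submatrix (K.orderEmbOfFin rfl) (J.1.orderEmbOfFin J.2)).det :=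
  statement6_general n A R K
end
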